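/- arXiv:2502.02430 — 5 statements merged into one kernel-verified Lean document; each statement's English description precedes it below -/
import Mathlib

section
/- The function ψ is continuous on [0, ∞); in particular, at every breakpoint ι = kβ (k a positive integer) the newly appearing summand R_k(γ(ι − kβ)) vanishes, so the piecewise-defined sum has no jumps. -/
open Real Finset

/-- Normalized residual of the `i`-th Taylor approximation of the exponential:
`R_i(x) = (exp x − ∑_{j=0}^{i} x^j/j!) / exp x`. -/
noncomputable def Rres (i : ℕ) (x : ℝ) : ℝ :=
  (Real.exp x - ∑ j ∈ Finset.range (i + 1), x ^ j / (Nat.factorial j : ℝ)) / Real.exp x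

/-- Expected crawl-interval length `ψ(ι) = ∑_{i=0}^{⌊ι/β⌋} (1/γ)·R_i(γ(ι − iβ))`. -/
noncomputable def psi (γ β : ℝ) (ι : ℝ) : ℝ :=
  ∑ i ∈ Finset.range (⌊ι / β⌋₊ + 1), (1 / γ) * Rres i (γ * (ι - (i : ℝ) * β))

lemma Rres_continuous (i : ℕ) : Continuous (Rres i) := by
  unfold Rres
  exact (Real.continuous_exp.sub
      (continuous_finset_sum _ fun j _ => (continuous_pow j).div_const _)).div
    Real.continuous_exp (fun x => (Real.exp_pos x).ne')

lemma Rres_zero (i : ℕ) : Rres i 0 = 0 := by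
  unfold Rres
  rw [Finset.sum_eq_single 0]
  · simp
  · intro j _ hj; simp [zero_pow hj]
  · simp

/-- The function `ψ` is continuous on `[0, ∞)`. -/
theorem stmt_3 (γ β : ℝ) (hγ : 0 < γ) (hβ : 0 < β) :
    ContinuousOn (psi γ β) (Set.Ici (0 : ℝ)) := by
  intro a ha
  simp only [Set.mem_Ici] at ha
  set N := ⌊a / β⌋₊ + 1 with hN
  set F : ℝ → ℝ := fun ι => ∑ i ∈ Finset.range (N + 1),
      (1 / γ) * Rres i (γ * max (ι - (i : ℝ) * β) 0) with hF
  have hFcont : Continuous F := by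
    apply continuous_finset_sum
    intro i _
    exact continuous_const.mul ((Rres_continuous i).comp
      (continuous_const.mul ((continuous_id.sub continuous_const).max continuous_const)))
  have heq : ∀ ι ∈ Set.Ici (0 : ℝ) ∩ Set.Iio (a + β), psi γ β ι = F ι := by
    rintro ι ⟨hι0, hιlt⟩
    simp only [Set.mem_Ici] at hι0
    simp only [Set.mem_Iio] at hιlt
    have hfloor : ⌊ι / β⌋₊ ≤ N := by
      have h1 : ι / β ≤ a / β + 1 := by
        rw [div_add' _ _ _ hβ.ne', one_mul]
        exact div_le_div_of_nonneg_right hιlt.le hβ.le |>.trans_eq rfl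
      calc ⌊ι / β⌋₊ ≤ ⌊a / β + 1⌋₊ := Nat.floor_le_floor h1
        _ = N := by rw [Nat.floor_add_one (div_nonneg ha hβ.le)]
    have hstep1 : psi γ β ι = ∑ i ∈ Finset.range (⌊ι / β⌋₊ + 1),
        (1 / γ) * Rres i (γ * max (ι - (i : ℝ) * β) 0) := by
      unfold psi
      apply Finset.sum_congr rfl
      intro i hi
      have hi' : (i : ℝ) ≤ ι / β := by
        have := Nat.le_floor_iff (div_nonneg hι0 hβ.le) |>.mp
          (Nat.lt_succ_iff.mp (Finset.mem_range.mp hi))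
        exact this
      have : (i : ℝ) * β ≤ ι := by
        rw [← le_div_iff₀ hβ]; exact hi'
      rw [max_eq_left (by linarith)]
    rw [hstep1, hF]
    apply Finset.sum_subset (Finset.range_subset_range.mpr (by omega))
    intro i hi hni
    have hgt : ⌊ι / β⌋₊ < i := by
      simp only [Finset.mem_range] at hi hni; omega
    have : ι / β < i := Nat.lt_of_floor_lt hgt
    have hlt : ι < (i : ℝ) * β := by
      rw [div_lt_iff₀ hβ] at this; linarith
    rw [max_eq_right (by linarith), mul_zero, Rres_zero, mul_zero]
  have hmem : Set.Ici (0 : ℝ) ∩ Set.Iio (a + β) ∈ nhdsWithin a (Set.Ici 0) := by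
    apply Filter.inter_mem self_mem_nhdsWithin
    exact nhdsWithin_le_nhds (Iio_mem_nhds (by linarith))
  have hev : psi γ β =ᶠ[nhdsWithin a (Set.Ici 0)] F := by
    filter_upwards [hmem] with ι hι using heq ι hι
  exact hFcont.continuousWithinAt.congr_of_eventuallyEq hev
    (heq a ⟨Set.mem_Ici.mpr ha, Set.mem_Iio.mpr (by linarith)⟩)
end

section
/- For every real ι > 0 such that ι/β is not an integer, ψ is differentiable at ι with derivative ψ'(ι) = ∑_{i=0}^{⌊ι/β⌋} (γ(ι − iβ))^i / i! · exp(−γ(ι − iβ)). -/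
open Real Finset

open scoped Nat

/- Near a point `ι` with `ι/β` not an integer the number of summands `⌊ι/β⌋₊ + 1` is locally
constant, so `ψ` is locally a finite sum of the smooth functions `y ↦ R_i(γ(y − iβ))/γ`.
Differentiating `R_i(x) = 1 − e⁻ˣ ∑_{j ≤ i} xʲ/j!` telescopes to `R_i'(x) = xⁱ/i! · e⁻ˣ`. -/

theorem Int.eventually_floor_eq {α : Type*} [Ring α] [LinearOrder α] [IsStrictOrderedRing α]
    [FloorRing α] [TopologicalSpace α] [OrderTopology α] {x : α} (hx : ∀ k : ℤ, x ≠ k) :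
    ∀ᶠ y in nhds x, ⌊y⌋ = ⌊x⌋ := by
  have hlt : (⌊x⌋ : α) < x := (Int.floor_le x).lt_of_ne (hx ⌊x⌋).symm
  filter_upwards [Ioo_mem_nhds hlt (Int.lt_floor_add_one x)] with y hy
  exact Int.floor_eq_iff.2 ⟨hy.1.le, hy.2⟩

theorem Nat.eventually_floor_eq {α : Type*} [Ring α] [LinearOrder α] [IsStrictOrderedRing α]
    [FloorRing α] [TopologicalSpace α] [OrderTopology α] {x : α} (hx : ∀ k : ℤ, x ≠ k) :
    ∀ᶠ y in nhds x, ⌊y⌋₊ = ⌊x⌋₊ := by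
  filter_upwards [Int.eventually_floor_eq hx] with y hy
  rw [← Int.floor_toNat, hy, Int.floor_toNat]

theorem hasDerivAt_pow_succ_div_factorial (n : ℕ) (x : ℝ) :
    HasDerivAt (fun y : ℝ => y ^ (n + 1) / ((n + 1)! : ℝ)) (x ^ n / (n ! : ℝ)) x := by
  refine ((hasDerivAt_pow (n + 1) x).div_const ((n + 1)! : ℝ)).congr_deriv ?_
  rw [Nat.factorial_succ, Nat.add_sub_cancel]
  push_cast
  field_simp

theorem hasDerivAt_sum_range_pow_div_factorial (i : ℕ) (x : ℝ) :
    HasDerivAt (fun y : ℝ => ∑ j ∈ range (i + 1), y ^ j / (j ! : ℝ))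
      (∑ j ∈ range i, x ^ j / (j ! : ℝ)) x := by
  induction i with
  | zero => simpa using hasDerivAt_const x (1 : ℝ)
  | succ n ih =>
    simpa only [sum_range_succ] using ih.fun_add (hasDerivAt_pow_succ_div_factorial n x)

theorem Rres_eq_one_sub_mul_exp_neg (i : ℕ) (x : ℝ) :
    Rres i x = 1 - (∑ j ∈ range (i + 1), x ^ j / (j ! : ℝ)) * exp (-x) := by
  rw [Rres, exp_neg]
  field_simp [exp_ne_zero]

theorem hasDerivAt_Rres (i : ℕ) (x : ℝ) :
    HasDerivAt (Rres i) (x ^ i / (i ! : ℝ) * exp (-x)) x := by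
  have hexp : HasDerivAt (fun y : ℝ => exp (-y)) (-exp (-x)) x := by
    simpa using (hasDerivAt_neg x).exp
  have h := (hasDerivAt_const x (1 : ℝ)).fun_sub
    ((hasDerivAt_sum_range_pow_div_factorial i x).fun_mul hexp)
  rw [show Rres i = _ from funext (Rres_eq_one_sub_mul_exp_neg i)]
  refine h.congr_deriv ?_
  rw [sum_range_succ]
  ring

theorem hasDerivAt_inv_mul_Rres_mul_sub {γ : ℝ} (hγ : γ ≠ 0) (i : ℕ) (c x : ℝ) :
    HasDerivAt (fun y => (1 / γ) * Rres i (γ * (y - c)))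
      ((γ * (x - c)) ^ i / (i ! : ℝ) * exp (-(γ * (x - c)))) x := by
  have hlin : HasDerivAt (fun y : ℝ => γ * (y - c)) γ x := by
    simpa using ((hasDerivAt_id x).sub_const c).const_mul γ
  refine (((hasDerivAt_Rres i _).comp x hlin).const_mul (1 / γ)).congr_deriv ?_
  field_simp

theorem stmt_4_general (γ β ι : ℝ) (hγ : 0 < γ)
    (hnotint : ∀ k : ℤ, ι / β ≠ (k : ℝ)) :
    HasDerivAt (psi γ β)
      (∑ i ∈ Finset.range (⌊ι / β⌋₊ + 1),
        (γ * (ι - (i : ℝ) * β)) ^ i / (Nat.factorial i : ℝ) *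
          Real.exp (-(γ * (ι - (i : ℝ) * β)))) ι := by
  have hfloor : ∀ᶠ y in nhds ι, ⌊y / β⌋₊ = ⌊ι / β⌋₊ :=
    ((continuous_id.div_const β).tendsto ι).eventually (Nat.eventually_floor_eq hnotint)
  have hpsi : psi γ β =ᶠ[nhds ι] fun y =>
      ∑ i ∈ range (⌊ι / β⌋₊ + 1), (1 / γ) * Rres i (γ * (y - (i : ℝ) * β)) := by
    filter_upwards [hfloor] with y hy
    rw [psi, hy]
  refine (HasDerivAt.fun_sum fun i _ => ?_).congr_of_eventuallyEq hpsi
  exact hasDerivAt_inv_mul_Rres_mul_sub hγ.ne' i _ ι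

/-- For every real `ι > 0` such that `ι/β` is not an integer, `ψ` is differentiable at `ι` with
derivative `ψ'(ι) = ∑_{i=0}^{⌊ι/β⌋} (γ(ι − iβ))^i / i! · exp(−γ(ι − iβ))`. -/
theorem stmt_4 (γ β ι : ℝ) (hγ : 0 < γ) (hβ : 0 < β) (hι : 0 < ι)
    (hnotint : ∀ k : ℤ, ι / β ≠ (k : ℝ)) :
    HasDerivAt (psi γ β)
      (∑ i ∈ Finset.range (⌊ι / β⌋₊ + 1),
        (γ * (ι - (i : ℝ) * β)) ^ i / (Nat.factorial i : ℝ) *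
          Real.exp (-(γ * (ι - (i : ℝ) * β)))) ι :=
  stmt_4_general γ β ι hγ hnotint
end

section
/- The crawl value function V satisfies V(0) = 0 and V(ι) > 0 for every ι > 0. -/
open Real Finset

/-- Expected cumulative freshness `w(ι) = ∑_{i=0}^{⌊ι/β⌋} (ν^i/(Δ+ν)^{i+1})·R_i((α+γ)(ι − iβ))`. -/
noncomputable def wfun (α β γ ν Δ : ℝ) (ι : ℝ) : ℝ :=
  ∑ i ∈ Finset.range (⌊ι / β⌋₊ + 1),
    (ν ^ i / (Δ + ν) ^ (i + 1)) * Rres i ((α + γ) * (ι - (i : ℝ) * β))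

/-- Crawl value function `V(ι) = μ̃·(w(ι) − exp(−αι)·ψ(ι))`. -/
noncomputable def Vfun (μ α β γ ν Δ : ℝ) (ι : ℝ) : ℝ :=
  μ * (wfun α β γ ν Δ ι - Real.exp (-(α * ι)) * psi γ β ι)

/-!
Since `R_i(x) = e^{-x} ∑_{j>i} x^j/j!`, the relations `ν = γ e^{-αβ}` and `Δ + ν = α + γ` turn the
`i`-th summand of `w(ι) − e^{-αι} ψ(ι)` into a positive multiple of
`∑_{j>i} (γ^{i+1} (α+γ)^j − (α+γ)^{i+1} γ^j) t^j / j!` with `t = ι − iβ ≥ 0`. Every coefficient is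
nonnegative because `γ < α + γ`, and for `i = 0`, `t = ι > 0` the term `j = 2` is positive.
-/

open scoped Nat

lemma hasSum_exp_mul_Rres (i : ℕ) (x : ℝ) :
    HasSum (fun j ↦ x ^ (j + (i + 1)) / (j + (i + 1))!) (exp x * Rres i x) := by
  rw [Rres, mul_div_cancel₀ _ (exp_pos x).ne', Real.exp_eq_exp_ℝ]
  exact (hasSum_nat_add_iff' (i + 1)).2 (NormedSpace.expSeries_div_hasSum_exp x)

section Comparison

variable {a c t : ℝ}

lemma add_pow_mul_pow_div_factorial_le (ha : 0 ≤ a) (hc : 0 ≤ c) (ht : 0 ≤ t) (i j : ℕ) :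
    (c + a) ^ (i + 1) * ((a * t) ^ (j + (i + 1)) / (j + (i + 1))!) ≤
      a ^ (i + 1) * (((c + a) * t) ^ (j + (i + 1)) / (j + (i + 1))!) := by
  simp only [← mul_div_assoc, mul_pow]
  gcongr ?_ / _
  calc (c + a) ^ (i + 1) * (a ^ (j + (i + 1)) * t ^ (j + (i + 1)))
      = a ^ (i + 1) * (c + a) ^ (i + 1) * t ^ (j + (i + 1)) * a ^ j := by ring
    _ ≤ a ^ (i + 1) * (c + a) ^ (i + 1) * t ^ (j + (i + 1)) * (c + a) ^ j := by gcongr; linarith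
    _ = a ^ (i + 1) * ((c + a) ^ (j + (i + 1)) * t ^ (j + (i + 1))) := by ring

lemma add_pow_mul_pow_div_factorial_lt (ha : 0 < a) (hc : 0 < c) (ht : 0 < t) (i : ℕ) :
    (c + a) ^ (i + 1) * ((a * t) ^ (1 + (i + 1)) / (1 + (i + 1))!) <
      a ^ (i + 1) * (((c + a) * t) ^ (1 + (i + 1)) / (1 + (i + 1))!) := by
  simp only [← mul_div_assoc, mul_pow]
  gcongr ?_ / _
  calc (c + a) ^ (i + 1) * (a ^ (1 + (i + 1)) * t ^ (1 + (i + 1)))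
      = a ^ (i + 1) * (c + a) ^ (i + 1) * t ^ (1 + (i + 1)) * a := by ring
    _ < a ^ (i + 1) * (c + a) ^ (i + 1) * t ^ (1 + (i + 1)) * (c + a) := by gcongr; linarith
    _ = a ^ (i + 1) * ((c + a) ^ (1 + (i + 1)) * t ^ (1 + (i + 1))) := by ring

lemma add_pow_mul_exp_mul_Rres_le (ha : 0 ≤ a) (hc : 0 ≤ c) (ht : 0 ≤ t) (i : ℕ) :
    (c + a) ^ (i + 1) * (exp (a * t) * Rres i (a * t)) ≤
      a ^ (i + 1) * (exp ((c + a) * t) * Rres i ((c + a) * t)) :=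
  hasSum_le (add_pow_mul_pow_div_factorial_le ha hc ht i)
    ((hasSum_exp_mul_Rres i (a * t)).mul_left _) ((hasSum_exp_mul_Rres i ((c + a) * t)).mul_left _)

lemma add_pow_mul_exp_mul_Rres_lt (ha : 0 < a) (hc : 0 < c) (ht : 0 < t) (i : ℕ) :
    (c + a) ^ (i + 1) * (exp (a * t) * Rres i (a * t)) <
      a ^ (i + 1) * (exp ((c + a) * t) * Rres i ((c + a) * t)) :=
  hasSum_lt (add_pow_mul_pow_div_factorial_le ha.le hc.le ht.le i)
    (add_pow_mul_pow_div_factorial_lt ha hc ht i)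
    ((hasSum_exp_mul_Rres i (a * t)).mul_left _) ((hasSum_exp_mul_Rres i ((c + a) * t)).mul_left _)

end Comparison

lemma wfun_sub_exp_mul_psi {α β γ ν Δ : ℝ} (hγ : γ ≠ 0) (hαγ : α + γ ≠ 0) (hrates : α + γ = Δ + ν)
    (hnu : ν = γ * exp (-(α * β))) (ι : ℝ) :
    wfun α β γ ν Δ ι - exp (-(α * ι)) * psi γ β ι =
      ∑ i ∈ range (⌊ι / β⌋₊ + 1),
        exp (-(α * β)) ^ i * exp (-((α + γ) * (ι - i * β))) / (γ * (α + γ) ^ (i + 1)) *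
          (γ ^ (i + 1) * (exp ((α + γ) * (ι - i * β)) * Rres i ((α + γ) * (ι - i * β))) -
            (α + γ) ^ (i + 1) * (exp (γ * (ι - i * β)) * Rres i (γ * (ι - i * β)))) := by
  rw [wfun, psi, mul_sum, ← sum_sub_distrib]
  refine sum_congr rfl fun i _ ↦ ?_
  have hexp : exp (-(α * ι)) = exp (-(α * β)) ^ i * exp (-((α + γ) * (ι - i * β))) *
      exp (γ * (ι - i * β)) := by
    rw [← exp_nat_mul, ← exp_add, ← exp_add]; ring_nf
  rw [hexp, ← hrates, hnu, exp_neg ((α + γ) * _)]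
  field_simp
  ring

lemma nat_mul_le_of_mem_range_floor {β ι : ℝ} (hβ : 0 < β) (hι : 0 ≤ ι) {i : ℕ}
    (hi : i ∈ range (⌊ι / β⌋₊ + 1)) : i * β ≤ ι := by
  rw [← le_div_iff₀ hβ, ← Nat.le_floor_iff (by positivity)]
  exact Nat.lt_succ_iff.1 (mem_range.1 hi)

theorem stmt_11_general (μ α β γ ν Δ : ℝ) (hμ : 0 < μ) (hα : 0 < α) (hβ : 0 < β) (hγ : 0 < γ)
    (hrates : α + γ = Δ + ν) (hnu : ν = γ * Real.exp (-(α * β))) :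
    Vfun μ α β γ ν Δ 0 = 0 ∧ ∀ ι : ℝ, 0 < ι → 0 < Vfun μ α β γ ν Δ ι := by
  refine ⟨by simp [Vfun, wfun, psi, Rres], fun ι hι ↦ mul_pos hμ ?_⟩
  rw [wfun_sub_exp_mul_psi hγ.ne' (by positivity) hrates hnu]
  refine sum_pos' (fun i hi ↦ mul_nonneg (by positivity) (sub_nonneg.2 ?_)) ⟨0, by simp, ?_⟩
  · exact add_pow_mul_exp_mul_Rres_le hγ.le hα.le
      (sub_nonneg.2 (nat_mul_le_of_mem_range_floor hβ hι.le hi)) i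
  · exact mul_pos (by positivity) (sub_pos.2 (add_pow_mul_exp_mul_Rres_lt hγ hα (by simpa) 0))

/-- The crawl value function `V` satisfies `V(0) = 0` and `V(ι) > 0` for every `ι > 0`. -/
theorem stmt_11 (μ α β γ ν Δ : ℝ) (hμ : 0 < μ) (hα : 0 < α) (hβ : 0 < β) (hγ : 0 < γ)
    (hν : 0 < ν) (hΔ : 0 < Δ) (hrates : α + γ = Δ + ν) (hnu : ν = γ * Real.exp (-(α * β))) :
    Vfun μ α β γ ν Δ 0 = 0 ∧ ∀ ι : ℝ, 0 < ι → 0 < Vfun μ α β γ ν Δ ι :=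
  stmt_11_general μ α β γ ν Δ hμ hα hβ hγ hrates hnu
end

section
/- For all α > 0 and γ > 0, the limit as ι → ∞ of R_0((α+γ)ι)/(α+γ) − exp(−αι)·R_0(γι)/γ equals 1/(α+γ); that is, the crawl value function with noiseless change-indicating signals, multiplied by μ̃, tends to μ̃/Δ, where Δ = α + γ, as the threshold tends to infinity. -/
open Real Finset Filter

lemma Rres_zero_s15 (x : ℝ) : Rres 0 x = 1 - Real.exp (-x) := by
  unfold Rres
  rw [Finset.sum_range_one]
  simp [sub_div, div_self (Real.exp_ne_zero x), Real.exp_neg]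

/-- For all `α > 0` and `γ > 0`, the limit as `ι → ∞` of
`R_0((α+γ)ι)/(α+γ) − exp(−αι)·R_0(γι)/γ` equals `1/(α+γ)`. -/
theorem stmt_15 (α γ : ℝ) (hα : 0 < α) (hγ : 0 < γ) :
    Filter.Tendsto
      (fun ι : ℝ =>
        Rres 0 ((α + γ) * ι) / (α + γ) - Real.exp (-(α * ι)) * Rres 0 (γ * ι) / γ)
      Filter.atTop (nhds (1 / (α + γ))) := by
  have key : ∀ c : ℝ, 0 < c → Tendsto (fun ι : ℝ => Real.exp (-(c * ι))) atTop (nhds 0) := by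
    intro c hc
    have h1 : Tendsto (fun ι : ℝ => -(c * ι)) atTop atBot := by
      simpa using tendsto_neg_atBot_iff.mpr ((tendsto_id (α := ℝ)).const_mul_atTop hc)
    exact Real.tendsto_exp_atBot.comp h1
  simp only [Rres_zero_s15]
  have h1 := key (α + γ) (by linarith)
  have h2 := key α hα
  have h3 := key γ hγ
  have c1 : Tendsto (fun _ : ℝ => (1:ℝ)) atTop (nhds 1) := tendsto_const_nhds
  have := (((c1.sub h1).div_const (α + γ)).sub ((h2.mul (c1.sub h3)).div_const γ))
  simpa using this
end

section
/- The function G is strictly concave on (0, ∞), and G(ξ) tends to 0 as ξ → 0 from the right (so extending G by G(0) = 0 yields a continuous concave function on [0, ∞)). -/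
/-!
`G` is `μ/Δ` times the perspective `ξ ↦ ξ h(Δ/ξ)` of the strictly concave function
`h(t) = 1 - exp (-t)`, and taking perspectives preserves strict concavity. Near `0`, `G(ξ)` is
`(μ/Δ) ξ` times a factor tending to `1`.
-/

open Real Filter

noncomputable def Gfun (μ Δ : ℝ) (ξ : ℝ) : ℝ :=
  (μ / Δ) * ξ * (1 - Real.exp (-(Δ / ξ)))

open Set

theorem StrictConcaveOn.const_mul {E : Type*} [AddCommMonoid E] [Module ℝ E] {s : Set E}
    {f : E → ℝ} {c : ℝ} (hf : StrictConcaveOn ℝ s f) (hc : 0 < c) :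
    StrictConcaveOn ℝ s (fun x => c * f x) := by
  refine ⟨hf.1, fun x hx y hy hxy a b ha hb hab => ?_⟩
  have := mul_lt_mul_of_pos_left (hf.2 hx hy hxy ha hb hab) hc
  simp only [smul_eq_mul] at this ⊢
  linarith

theorem strictConvexOn_exp_neg : StrictConvexOn ℝ univ (fun t => exp (-t)) := by
  refine ⟨convex_univ, fun x _ y _ hxy a b ha hb hab => ?_⟩
  have := strictConvexOn_exp.2 (mem_univ (-x)) (mem_univ (-y)) (neg_injective.ne hxy) ha hb hab
  simpa only [smul_eq_mul, mul_neg, neg_add] using this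

theorem strictConcaveOn_one_sub_exp_neg : StrictConcaveOn ℝ univ (fun t => 1 - exp (-t)) :=
  (concaveOn_const 1 convex_univ).sub_strictConvexOn strictConvexOn_exp_neg

/-- `Δ/(a x + b y)` is the convex combination of `Δ/x` and `Δ/y` with weights `a x/(a x + b y)`
and `b y/(a x + b y)`. -/
theorem StrictConcaveOn.mul_comp_div {h : ℝ → ℝ} (hh : StrictConcaveOn ℝ (Ioi 0) h) {Δ : ℝ}
    (hΔ : 0 < Δ) : StrictConcaveOn ℝ (Ioi 0) (fun ξ => ξ * h (Δ / ξ)) := by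
  refine ⟨convex_Ioi 0, fun x (hx : 0 < x) y (hy : 0 < y) hxy a b ha hb hab => ?_⟩
  set z := a * x + b * y with hz_def
  have hz : 0 < z := by positivity
  have hdiv : Δ / x ≠ Δ / y := fun h => hxy (by field_simp at h; nlinarith)
  have key := hh.2 (div_pos hΔ hx) (div_pos hΔ hy) hdiv (by positivity : 0 < a * x / z)
    (by positivity : 0 < b * y / z) (by field_simp; exact hz_def.symm)
  have hcomb : a * x / z * (Δ / x) + b * y / z * (Δ / y) = Δ / z := by
    field_simp
    exact hab
  simp only [smul_eq_mul, hcomb] at key ⊢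
  have := mul_lt_mul_of_pos_left key hz
  field_simp at this
  linarith

theorem tendsto_one_sub_exp_neg_div_nhdsGT_zero {Δ : ℝ} (hΔ : 0 < Δ) :
    Tendsto (fun ξ => 1 - exp (-(Δ / ξ))) (nhdsWithin 0 (Ioi 0)) (nhds 1) := by
  have hdiv : Tendsto (fun ξ => Δ / ξ) (nhdsWithin 0 (Ioi 0)) atTop := by
    simpa only [div_eq_mul_inv] using tendsto_inv_nhdsGT_zero.const_mul_atTop hΔ
  simpa using (tendsto_exp_neg_atTop_nhds_zero.comp hdiv).const_sub 1

/-- The function `G` is strictly concave on `(0, ∞)`, and `G(ξ) → 0` as `ξ → 0⁺`. -/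
theorem stmt_17 (μ Δ : ℝ) (hμ : 0 < μ) (hΔ : 0 < Δ) :
    StrictConcaveOn ℝ (Set.Ioi (0 : ℝ)) (Gfun μ Δ) ∧
    Filter.Tendsto (Gfun μ Δ) (nhdsWithin 0 (Set.Ioi 0)) (nhds 0) := by
  constructor
  · have h := ((strictConcaveOn_one_sub_exp_neg.subset (subset_univ _) (convex_Ioi 0)).mul_comp_div
      hΔ).const_mul (div_pos hμ hΔ)
    refine h.congr fun ξ _ => ?_
    simp only [Gfun, mul_assoc]
  · have hlin : Tendsto (fun ξ : ℝ => μ / Δ * ξ) (nhdsWithin 0 (Ioi 0)) (nhds 0) :=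
      ((continuous_const_mul (μ / Δ)).tendsto' 0 0 (mul_zero _)).mono_left nhdsWithin_le_nhds
    have h := hlin.mul (tendsto_one_sub_exp_neg_div_nhdsGT_zero hΔ)
    rwa [zero_mul] at h
end
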